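/- arXiv:1310.0981 — 2 statements merged into one kernel-verified Lean document; each statement's English description precedes it below -/
import Mathlib

section
/- Let m ≥ 1 be an integer and α ∈ ℂ. Let f : ℝ × ℤ → ℂ be differentiable in the first (time) variable and satisfy the modified Bogoyavlensky lattice ∂_t f(t,n) = f(t,n)·(f(t,n) − α)·(∏_{s=1}^{m} f(t,n+s) − ∏_{s=1}^{m} f(t,n−s)) for all t and n. Then the function ũ(t,n) := (f(t,n+m) − α)·∏_{s=0}^{m−1} f(t,n+s) satisfies the Bogoyavlensky lattice ∂_t ũ(t,n) = ũ(t,n)·(Σ_{s=1}^{m} ũ(t,n+s) − Σ_{s=1}^{m} ũ(t,n−s)) for all t and n. -/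
/-!
Write `P k = f k ⋯ f (k+m-1)` and `Q k = f k ⋯ f (k+m)`, so that `ũ k = Q k - α P k`.
In terms of `P` the modified lattice reads `∂ₜ f k = f k · (f k - α)(P (k+1) - P (k-m))`, hence
`ũ n = (f (n+m) - α) ∏_{j<m} f (n+j)` has logarithmic derivative
`Σ_{j ≤ m} (f (n+j) - α)(P (n+j+1) - P (n+j-m)) + α (P (n+m+1) - P n)`.
Since `f k P (k+1) = Q k = P (k-m) f k`, each summand equals
`ũ k - ũ (k-m) + α (P k - P (k+1))`; the `P`-terms telescope against the extra summand and what is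
left is `Σ_{s=1}^m ũ (n+s) - Σ_{s=1}^m ũ (n-s)`.
-/

open Finset

theorem HasDerivAt.fun_finsetProd_of_eq_mul {𝕜 𝔸 ι : Type*} [NontriviallyNormedField 𝕜]
    [NormedCommRing 𝔸] [NormedAlgebra 𝕜 𝔸] {u : Finset ι} {f : ι → 𝕜 → 𝔸} {g : ι → 𝔸} {x : 𝕜}
    (hf : ∀ i ∈ u, HasDerivAt (f i) (f i x * g i) x) :
    HasDerivAt (∏ i ∈ u, f i ·) ((∏ i ∈ u, f i x) * ∑ i ∈ u, g i) x := by
  classical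
  convert HasDerivAt.fun_finsetProd hf using 1
  rw [mul_sum]
  refine sum_congr rfl fun i hi => ?_
  rw [smul_eq_mul, ← mul_assoc, prod_erase_mul _ _ hi]

namespace Bogoyavlensky

section Algebra

variable {R : Type*} [CommRing R]

def windowProd (v : ℤ → R) (m : ℕ) (k : ℤ) : R := ∏ i ∈ range m, v (k + i)

/-- The second Miura-type substitution `ũ = (f_m - α) f_{m-1} ⋯ f`. -/
def miuraSecond (v : ℤ → R) (α : R) (m : ℕ) (k : ℤ) : R := (v (k + m) - α) * windowProd v m k

variable (v : ℤ → R) (α : R) (m : ℕ)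

theorem windowProd_succ (k : ℤ) : windowProd v (m + 1) k = windowProd v m k * v (k + m) :=
  prod_range_succ _ _

theorem windowProd_succ' (k : ℤ) : windowProd v (m + 1) k = v k * windowProd v m (k + 1) := by
  simp only [windowProd, prod_range_succ', Nat.cast_add, Nat.cast_one, Nat.cast_zero, add_zero]
  rw [mul_comm]
  congr 1
  exact prod_congr rfl fun i _ => by rw [add_comm (i : ℤ), add_assoc]

theorem prod_range_add_one_eq_windowProd (k : ℤ) :
    ∏ s ∈ range m, v (k + s + 1) = windowProd v m (k + 1) :=
  prod_congr rfl fun s _ => by rw [add_right_comm]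

theorem sum_range_sub_sub_one {M : Type*} [AddCommMonoid M] (g : ℤ → M) (k : ℤ) :
    ∑ s ∈ range m, g (k - s - 1) = ∑ i ∈ range m, g (k - m + i) := by
  rw [← sum_range_reflect (fun i => g (k - m + i))]
  refine sum_congr rfl fun s hs => congrArg g ?_
  have := mem_range.mp hs
  omega

theorem prod_range_sub_sub_one_eq_windowProd (k : ℤ) :
    ∏ s ∈ range m, v (k - s - 1) = windowProd v m (k - m) := by
  rw [windowProd, ← prod_range_reflect (fun i => v (k - m + i))]
  refine prod_congr rfl fun s hs => congrArg v ?_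
  have := mem_range.mp hs
  omega

theorem miuraSecond_eq (k : ℤ) :
    miuraSecond v α m k = windowProd v (m + 1) k - α * windowProd v m k := by
  rw [miuraSecond, windowProd_succ]
  ring

theorem sub_mul_windowProd_sub (k : ℤ) :
    (v k - α) * (windowProd v m (k + 1) - windowProd v m (k - m)) =
      miuraSecond v α m k - miuraSecond v α m (k - m) +
        α * (windowProd v m k - windowProd v m (k + 1)) := by
  have hQ : windowProd v (m + 1) (k - m) = windowProd v m (k - m) * v k := by
    rw [windowProd_succ, sub_add_cancel]
  rw [miuraSecond_eq, miuraSecond_eq, windowProd_succ', hQ]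
  ring

theorem logDeriv_miuraSecond_eq (n : ℤ) :
    v (n + m) * (windowProd v m (n + m + 1) - windowProd v m n) +
        ∑ j ∈ range m, (v (n + j) - α) *
          (windowProd v m (n + j + 1) - windowProd v m (n + j - m)) =
      ∑ s ∈ range m, miuraSecond v α m (n + s + 1) -
        ∑ s ∈ range m, miuraSecond v α m (n - s - 1) := by
  set P := windowProd v m
  set u := miuraSecond v α m
  have hlast : v (n + m) * (P (n + m + 1) - P n) =
      (v (n + m) - α) * (P (n + m + 1) - P (n + m - m)) + α * (P (n + m + 1) - P n) := by
    rw [add_sub_cancel_right]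
    ring
  have htelescope : ∑ j ∈ range (m + 1), (v (n + j) - α) * (P (n + j + 1) - P (n + j - m)) =
      ∑ j ∈ range (m + 1), u (n + j) - ∑ j ∈ range (m + 1), u (n + j - m) +
        α * (P n - P (n + m + 1)) := by
    simp only [P, u, sub_mul_windowProd_sub, sum_add_distrib, sum_sub_distrib, ← mul_sum]
    have := sum_range_sub' (fun j : ℕ => windowProd v m (n + j)) (m + 1)
    push_cast at this
    simp only [add_zero, ← add_assoc] at this
    rw [← this, sum_sub_distrib]
  have hforward : ∑ j ∈ range (m + 1), u (n + j) = u n + ∑ s ∈ range m, u (n + s + 1) := by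
    rw [sum_range_succ', add_comm]
    push_cast
    simp only [add_zero, add_assoc]
  have hbackward : ∑ j ∈ range (m + 1), u (n + j - m) =
      ∑ s ∈ range m, u (n - s - 1) + u n := by
    rw [sum_range_succ, sum_range_sub_sub_one, add_sub_cancel_right]
    exact congrArg (· + u n) (sum_congr rfl fun j _ => by rw [sub_add_eq_add_sub])
  rw [sum_range_succ] at htelescope
  linear_combination hlast + htelescope + hforward - hbackward

end Algebra

theorem hasDerivAt_miuraSecond {𝕜 𝔸 : Type*} [NontriviallyNormedField 𝕜] [NormedCommRing 𝔸]
    [NormedAlgebra 𝕜 𝔸] {f : 𝕜 → ℤ → 𝔸} {α : 𝔸} {m : ℕ} {t : 𝕜}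
    (hf : ∀ k, HasDerivAt (fun τ => f τ k)
      (f t k * (f t k - α) * (windowProd (f t) m (k + 1) - windowProd (f t) m (k - m))) t)
    (n : ℤ) :
    HasDerivAt (fun τ => miuraSecond (f τ) α m n)
      (miuraSecond (f t) α m n * (∑ s ∈ range m, miuraSecond (f t) α m (n + s + 1) -
        ∑ s ∈ range m, miuraSecond (f t) α m (n - s - 1))) t := by
  rw [← logDeriv_miuraSecond_eq]
  have hwindow : HasDerivAt (fun τ => windowProd (f τ) m n) (windowProd (f t) m n *
      ∑ j ∈ range m, (f t (n + j) - α) *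
        (windowProd (f t) m (n + j + 1) - windowProd (f t) m (n + j - m))) t :=
    HasDerivAt.fun_finsetProd_of_eq_mul fun j _ => by simpa only [mul_assoc] using hf (n + j)
  refine (((hf (n + m)).sub_const α).mul hwindow).congr_deriv ?_
  rw [add_sub_cancel_right, miuraSecond]
  ring

end Bogoyavlensky

theorem miura_modified_to_bogoyavlensky_second_general
    (m : ℕ) (α : ℂ)
    (f : ℝ → ℤ → ℂ)
    (hf : ∀ (t : ℝ) (n : ℤ),
      HasDerivAt (fun τ => f τ n)
        (f t n * (f t n - α) *
          ((∏ s ∈ Finset.range m, f t (n + s + 1)) -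
            ∏ s ∈ Finset.range m, f t (n - s - 1))) t)
    (u' : ℝ → ℤ → ℂ)
    (hu' : ∀ (t : ℝ) (n : ℤ),
      u' t n = (f t (n + m) - α) * ∏ s ∈ Finset.range m, f t (n + s)) :
    ∀ (t : ℝ) (n : ℤ),
      HasDerivAt (fun τ => u' τ n)
        (u' t n *
          ((∑ s ∈ Finset.range m, u' t (n + s + 1)) -
            ∑ s ∈ Finset.range m, u' t (n - s - 1))) t := by
  intro t n
  have hu'_eq : u' = fun τ => Bogoyavlensky.miuraSecond (f τ) α m := funext₂ hu'
  subst hu'_eq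
  refine Bogoyavlensky.hasDerivAt_miuraSecond (fun k => ?_) n
  simpa only [Bogoyavlensky.prod_range_add_one_eq_windowProd,
    Bogoyavlensky.prod_range_sub_sub_one_eq_windowProd] using hf t k

/-- The Miura-type substitution `ũ = (f_m - α) f_{m-1} ⋯ f` maps solutions of the
modified Bogoyavlensky lattice into solutions of the Bogoyavlensky lattice. -/
theorem miura_modified_to_bogoyavlensky_second
    (m : ℕ) (hm : 1 ≤ m) (α : ℂ)
    (f : ℝ → ℤ → ℂ)
    (hf : ∀ (t : ℝ) (n : ℤ),
      HasDerivAt (fun τ => f τ n)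
        (f t n * (f t n - α) *
          ((∏ s ∈ Finset.range m, f t (n + s + 1)) -
            ∏ s ∈ Finset.range m, f t (n - s - 1))) t)
    (u' : ℝ → ℤ → ℂ)
    (hu' : ∀ (t : ℝ) (n : ℤ),
      u' t n = (f t (n + m) - α) * ∏ s ∈ Finset.range m, f t (n + s)) :
    ∀ (t : ℝ) (n : ℤ),
      HasDerivAt (fun τ => u' τ n)
        (u' t n *
          ((∑ s ∈ Finset.range m, u' t (n + s + 1)) -
            ∑ s ∈ Finset.range m, u' t (n - s - 1))) t :=
  miura_modified_to_bogoyavlensky_second_general m α f hf u' hu'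
end

section
/- Let m ≥ 1 be an integer. Let v : ℝ × ℤ → ℂ be differentiable in the time variable, with v(t,n) ≠ 0 for all t, n, and satisfy ∂_t v(t,n) = (∏_{s=0}^{m−1} v(t,n+s))/(∏_{s=1}^{m} v(t,n−s))·(v(t,n+m) − v(t,n−m)) for all t and n. Then the function u(t,n) := v(t,n+m)/v(t,n) satisfies ∂_t u(t,n) = u(t,n)²·(∏_{s=1}^{m} u(t,n+s) − ∏_{s=1}^{m} u(t,n−s)) − u(t,n)·(∏_{s=1}^{m−1} u(t,n+s) − ∏_{s=1}^{m−1} u(t,n−s)) for all t and n. -/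
/-!
Along the potential flow the logarithmic derivative of `v_n` is a polynomial in `u`:
`∂_t v_n / v_n = u_n ∏_{s=1}^{m} u_{n-s} - ∏_{s=1}^{m-1} u_{n-s} =: Λ_n`, because
`∏_{s=1}^{m} u_{n-s} = (v_{m-1}⋯v)/(v_{-1}⋯v_{-m})` telescopes. Hence `∂_t u_n = u_n (Λ_{n+m} - Λ_n)`,
and shifting by `m` turns the backward products in `Λ_{n+m}` into the forward products of the
lattice equation.
-/

open Finset

section Reflection

variable {M : Type*} [CommMonoid M]

theorem prod_range_sub_reflect (f : ℤ → M) (a : ℤ) (k : ℕ) :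
    ∏ s ∈ range k, f (a - s - 1) = ∏ s ∈ range k, f (a - k + s) := by
  rw [← prod_range_reflect (fun s : ℕ => f (a - k + s))]
  refine prod_congr rfl fun s hs => congrArg f ?_
  have := mem_range.mp hs
  omega

theorem prod_shift_sub_mul_eq_mul_prod (f : ℤ → M) (n : ℤ) (m : ℕ) :
    (∏ s ∈ range m, f (n + m - s - 1)) * f (n + m) = f n * ∏ s ∈ range m, f (n + s + 1) := by
  have h := prod_range_succ' (fun s : ℕ => f (n + s)) m
  rw [prod_range_succ, mul_comm _ (f _)] at h
  simp only [prod_range_sub_reflect, add_sub_cancel_right, Nat.cast_zero, add_zero,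
    Nat.cast_add, Nat.cast_one, ← add_assoc] at h ⊢
  rw [mul_comm, h, mul_comm]

theorem prod_shift_sub_eq_prod (f : ℤ → M) (n : ℤ) {m : ℕ} (hm : 1 ≤ m) :
    ∏ s ∈ range (m - 1), f (n + m - s - 1) = ∏ s ∈ range (m - 1), f (n + s + 1) := by
  rw [prod_range_sub_reflect]
  exact prod_congr rfl fun s _ => congrArg f (by omega)

end Reflection

section Potential

variable {K : Type*} [Field K] {w u : ℤ → K} {m : ℕ}

def potentialLogDeriv (u : ℤ → K) (m : ℕ) (n : ℤ) : K :=
  u n * ∏ s ∈ range m, u (n - s - 1) - ∏ s ∈ range (m - 1), u (n - s - 1)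

theorem prod_range_ratio_sub_eq_div (hu : ∀ n, u n = w (n + m) / w n) (n : ℤ) :
    ∏ s ∈ range m, u (n - s - 1) =
      (∏ s ∈ range m, w (n + s)) / ∏ s ∈ range m, w (n - s - 1) := by
  simp only [hu, prod_div_distrib]
  rw [prod_range_sub_reflect (fun a => w (a + m))]
  congr 1
  exact prod_congr rfl fun s _ => congrArg w (by ring)

theorem potential_rhs_eq_mul_potentialLogDeriv (hw : ∀ n, w n ≠ 0)
    (hu : ∀ n, u n = w (n + m) / w n) (hm : 1 ≤ m) (n : ℤ) :
    (∏ s ∈ range m, w (n + s)) / (∏ s ∈ range m, w (n - s - 1)) * (w (n + m) - w (n - m)) =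
      w n * potentialLogDeriv u m n := by
  rw [potentialLogDeriv, ← prod_range_ratio_sub_eq_div hu]
  obtain ⟨k, rfl⟩ := Nat.exists_eq_add_of_le' hm
  have hlast : u (n - k - 1) = w n / w (n - (k + 1 : ℕ)) := by
    rw [hu]; push_cast; ring_nf
  rw [Nat.add_sub_cancel, prod_range_succ, hlast, hu n]
  field_simp [hw]

end Potential

theorem HasDerivAt.div_of_logDeriv {𝕜 𝕜' : Type*} [NontriviallyNormedField 𝕜]
    [NontriviallyNormedField 𝕜'] [NormedAlgebra 𝕜 𝕜'] {f g : 𝕜 → 𝕜'} {a b : 𝕜'} {x : 𝕜}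
    (hf : HasDerivAt f (f x * a) x) (hg : HasDerivAt g (g x * b) x) (hx : g x ≠ 0) :
    HasDerivAt (fun y => f y / g y) (f x / g x * (a - b)) x :=
  (hf.div hg hx).congr_deriv (by field_simp)

/-- The substitution `u = v_m / v` maps solutions of the potential lattice
`∂_t v = (v_{m-1}⋯v)/(v_{-1}⋯v_{-m}) (v_m - v_{-m})` into solutions of the integrable
discretization of the Sawada–Kotera equation. -/
theorem potential_to_dSK
    (m : ℕ) (hm : 1 ≤ m)
    (v : ℝ → ℤ → ℂ) (hv0 : ∀ (t : ℝ) (n : ℤ), v t n ≠ 0)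
    (hv : ∀ (t : ℝ) (n : ℤ),
      HasDerivAt (fun τ => v τ n)
        ((∏ s ∈ Finset.range m, v t (n + s)) / (∏ s ∈ Finset.range m, v t (n - s - 1))
          * (v t (n + m) - v t (n - m))) t)
    (u : ℝ → ℤ → ℂ)
    (hu : ∀ (t : ℝ) (n : ℤ), u t n = v t (n + m) / v t n) :
    ∀ (t : ℝ) (n : ℤ),
      HasDerivAt (fun τ => u τ n)
        (u t n ^ 2 *
            ((∏ s ∈ Finset.range m, u t (n + s + 1)) -
              ∏ s ∈ Finset.range m, u t (n - s - 1))
          - u t n *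
            ((∏ s ∈ Finset.range (m - 1), u t (n + s + 1)) -
              ∏ s ∈ Finset.range (m - 1), u t (n - s - 1))) t := by
  intro t n
  have hlog : ∀ a, HasDerivAt (fun τ => v τ a) (v t a * potentialLogDeriv (u t) m a) t :=
    fun a => (hv t a).congr_deriv (potential_rhs_eq_mul_potentialLogDeriv (hv0 t) (hu t) hm a)
  have hquot := (hlog (n + m)).div_of_logDeriv (hlog n) (hv0 t n)
  rw [show (fun τ => u τ n) = fun τ => v τ (n + m) / v τ n from funext (hu · n)]
  refine hquot.congr_deriv ?_
  rw [← hu t n, potentialLogDeriv, potentialLogDeriv, prod_shift_sub_eq_prod _ _ hm,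
    mul_comm (u t (n + m)), prod_shift_sub_mul_eq_mul_prod]
  ring
end
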